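/- arXiv:2301.02600 — 5 statements merged into one kernel-verified Lean document; each statement's English description precedes it below -/
import Mathlib

section
/- For every real γ ≥ 1 and every real n with 1 < n < 2, one has −1 < F(γ, n) < 0; hence the vertex angle θ(γ, n) = arccos(F(γ, n)) is real and obtuse: 90° < θ(γ, n) < 180°. -/
/-- The cosine of the vertex angle of the triangle realizing the `n`-degree
Pythagorean theorem `a^n + (γa)^n = c^n` with side ratio `γ`. -/
noncomputable def pythCos (γ n : ℝ) : ℝ :=
  (γ ^ 2 + 1 - (γ ^ n + 1) ^ (2 / n)) / (2 * γ)

lemma rpow_add_lt_aux {x y p : ℝ} (hx : 0 < x) (hy : 0 < y) (hp : 1 < p) :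
    x ^ p + y ^ p < (x + y) ^ p := by
  have hxy : 0 < x + y := by linarith
  have hp1 : 0 < p - 1 := by linarith
  have hx' : x ^ (p - 1) < (x + y) ^ (p - 1) :=
    Real.rpow_lt_rpow hx.le (by linarith) hp1
  have hy' : y ^ (p - 1) < (x + y) ^ (p - 1) :=
    Real.rpow_lt_rpow hy.le (by linarith) hp1
  have ex : x ^ p = x ^ (p - 1) * x := by
    rw [← Real.rpow_add_one hx.ne' (p - 1)]; ring_nf
  have ey : y ^ p = y ^ (p - 1) * y := by
    rw [← Real.rpow_add_one hy.ne' (p - 1)]; ring_nf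
  have exy : (x + y) ^ p = (x + y) ^ (p - 1) * (x + y) := by
    rw [← Real.rpow_add_one hxy.ne' (p - 1)]; ring_nf
  rw [ex, ey, exy]
  nlinarith [mul_lt_mul_of_pos_right hx' hx, mul_lt_mul_of_pos_right hy' hy,
    Real.rpow_pos_of_pos hxy (p - 1)]

theorem stmt_2 (γ n : ℝ) (hγ : 1 ≤ γ) (hn1 : 1 < n) (hn2 : n < 2) :
    (-1 < pythCos γ n ∧ pythCos γ n < 0) ∧
      Real.pi / 2 < Real.arccos (pythCos γ n) ∧
        Real.arccos (pythCos γ n) < Real.pi := by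
  have hγ0 : (0:ℝ) < γ := by linarith
  have hn0 : (0:ℝ) < n := by linarith
  have hp : 1 < 2 / n := by
    rw [lt_div_iff₀ hn0]; linarith
  have hγn : 0 < γ ^ n := Real.rpow_pos_of_pos hγ0 n
  -- Key 1 : γ^2 + 1 < (γ^n + 1)^(2/n)
  have hmul : (γ ^ n) ^ (2 / n) = γ ^ (2:ℕ) := by
    rw [← Real.rpow_natCast γ 2, ← Real.rpow_mul hγ0.le]
    congr 1
    field_simp
    norm_num
  have key1 : γ ^ 2 + 1 < (γ ^ n + 1) ^ (2 / n) := by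
    have := rpow_add_lt_aux hγn one_pos hp
    rwa [hmul, Real.one_rpow] at this
  -- Key 2 : (γ^n + 1)^(2/n) < (γ + 1)^2
  have h2 : γ ^ n + 1 < (γ + 1) ^ n := by
    have := rpow_add_lt_aux hγ0 one_pos hn1
    rwa [Real.one_rpow] at this
  have key2 : (γ ^ n + 1) ^ (2 / n) < (γ + 1) ^ 2 := by
    have hlt : (γ ^ n + 1) ^ (2 / n) < ((γ + 1) ^ n) ^ (2 / n) :=
      Real.rpow_lt_rpow (by positivity) h2 (by positivity)
    have heq : ((γ + 1) ^ n) ^ (2 / n) = (γ + 1) ^ (2:ℕ) := by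
      rw [← Real.rpow_natCast (γ + 1) 2, ← Real.rpow_mul (by linarith)]
      congr 1
      field_simp
      norm_num
    rwa [heq] at hlt
  have hneg : pythCos γ n < 0 := by
    apply div_neg_of_neg_of_pos _ (by linarith)
    linarith
  have hgt : -1 < pythCos γ n := by
    rw [pythCos, neg_lt, ← neg_div, div_lt_one (by linarith)]
    nlinarith
  refine ⟨⟨hgt, hneg⟩, ?_, ?_⟩
  · exact lt_of_not_ge fun h => absurd (Real.arccos_le_pi_div_two.mp h) (by linarith)
  · exact lt_of_le_of_ne (Real.arccos_le_pi _)
      (fun h => absurd (Real.arccos_eq_pi.mp h) (by linarith))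
end

section
/- For every real γ ≥ 1 and every real n > 2, one has 0 < F(γ, n) < 1; hence the vertex angle θ(γ, n) = arccos(F(γ, n)) is real and acute: 0° < θ(γ, n) < 90°. -/
lemma aux_pow (x p : ℝ) (hx : 1 ≤ x) (hp : 1 < p) :
    x ^ p + 1 < (x + 1) ^ p := by
  have hx0 : (0:ℝ) < x := lt_of_lt_of_le one_pos hx
  have hx1 : (0:ℝ) < x + 1 := by linarith
  have hp0 : 0 < p - 1 := by linarith
  have h1 : x ^ (p - 1) < (x + 1) ^ (p - 1) :=
    Real.rpow_lt_rpow hx0.le (by linarith) hp0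
  have h2 : (1:ℝ) ≤ (x + 1) ^ (p - 1) := by
    calc (1:ℝ) = (1:ℝ) ^ (p-1) := (Real.one_rpow _).symm
    _ ≤ (x + 1) ^ (p - 1) := Real.rpow_le_rpow zero_le_one (by linarith) hp0.le
  have key : x ^ (p - 1) * x + 1 < (x + 1) ^ (p - 1) * (x + 1) := by
    have := mul_lt_mul_of_pos_right h1 hx0
    nlinarith
  calc x ^ p + 1 = x ^ (p - 1) * x + 1 := by
        rw [← Real.rpow_add_one hx0.ne' (p-1)]; ring_nf
    _ < (x + 1) ^ (p - 1) * (x + 1) := key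
    _ = (x + 1) ^ p := by rw [← Real.rpow_add_one hx1.ne' (p-1)]; ring_nf

theorem stmt_3 (γ n : ℝ) (hγ : 1 ≤ γ) (hn : 2 < n) :
    (0 < pythCos γ n ∧ pythCos γ n < 1) ∧
      0 < Real.arccos (pythCos γ n) ∧
        Real.arccos (pythCos γ n) < Real.pi / 2 := by
  have hγ0 : (0:ℝ) < γ := lt_of_lt_of_le one_pos hγ
  have hn0 : (0:ℝ) < n := by linarith
  have hsq : γ ^ n = (γ ^ 2 : ℝ) ^ (n / 2) := by
    rw [← Real.rpow_natCast γ 2, ← Real.rpow_mul hγ0.le]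
    norm_num
    rw [show (2:ℝ) * (n / 2) = n by ring]
  have hX1 : (γ ^ n + 1) ^ (2 / n) < γ ^ 2 + 1 := by
    have hsq1 : (1:ℝ) ≤ γ ^ 2 := one_le_pow₀ hγ
    have h1 : γ ^ n + 1 < (γ ^ 2 + 1) ^ (n / 2) := by
      rw [hsq]
      exact aux_pow _ _ hsq1 (by linarith [(by linarith : (2:ℝ) < n)])
    have hgn : (0:ℝ) ≤ γ ^ n + 1 := by
      have : (0:ℝ) < γ ^ n := Real.rpow_pos_of_pos hγ0 n
      linarith
    calc (γ ^ n + 1) ^ (2 / n) < ((γ ^ 2 + 1) ^ (n / 2)) ^ (2 / n) :=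
          Real.rpow_lt_rpow hgn h1 (by positivity)
      _ = γ ^ 2 + 1 := by
          rw [← Real.rpow_mul (by positivity)]
          rw [show n / 2 * (2 / n) = 1 by field_simp]
          exact Real.rpow_one _
  have hX2 : γ ^ 2 < (γ ^ n + 1) ^ (2 / n) := by
    have : γ ^ n < γ ^ n + 1 := by linarith
    calc γ ^ 2 = (γ ^ n) ^ (2 / n) := by
          rw [← Real.rpow_natCast γ 2, ← Real.rpow_mul hγ0.le]
          congr 1; field_simp; norm_num
      _ < (γ ^ n + 1) ^ (2 / n) :=
          Real.rpow_lt_rpow (Real.rpow_pos_of_pos hγ0 n).le this (by positivity)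
  have h2γ : (0:ℝ) < 2 * γ := by linarith
  have hF0 : 0 < pythCos γ n := by
    unfold pythCos
    apply div_pos _ h2γ
    linarith
  have hF1 : pythCos γ n < 1 := by
    unfold pythCos
    rw [div_lt_one h2γ]
    nlinarith
  exact ⟨⟨hF0, hF1⟩, Real.arccos_pos.mpr hF1, Real.arccos_lt_pi_div_two.mpr hF0⟩
end

section
/- For every real n with 1 < n < 2 and every real γ ≥ 1, F(γ, n) ≥ 1 − 2^((2−n)/n), with equality if and only if γ = 1; equivalently, for fixed degree n ∈ (1, 2) the largest vertex angle θ(γ, n) over all side ratios γ ≥ 1 is θ_max = arccos(1 − 2^((2−n)/n)), attained exactly by the isosceles triangle γ = 1. -/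
lemma coth_strictAnti : StrictAntiOn (fun x => Real.cosh x / Real.sinh x) (Set.Ioi 0) := by
  intro a ha b hb hab
  have hsa : 0 < Real.sinh a := Real.sinh_pos_iff.2 ha
  have hsb : 0 < Real.sinh b := Real.sinh_pos_iff.2 hb
  rw [div_lt_div_iff₀ hsb hsa]
  have h : Real.sinh (b - a) > 0 := Real.sinh_pos_iff.2 (by linarith)
  rw [Real.sinh_sub] at h
  nlinarith

lemma log_sinh_concave : StrictConcaveOn ℝ (Set.Ioi 0) (fun x => Real.log (Real.sinh x)) := by
  have hderiv : ∀ x ∈ Set.Ioi (0:ℝ), deriv (fun x => Real.log (Real.sinh x)) x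
      = Real.cosh x / Real.sinh x := by
    intro x hx
    have hs : Real.sinh x ≠ 0 := ne_of_gt (Real.sinh_pos_iff.2 hx)
    have := (Real.hasDerivAt_sinh x).log hs
    simpa [div_eq_mul_inv, mul_comm] using this.deriv
  apply StrictAntiOn.strictConcaveOn_of_deriv (convex_Ioi 0)
  · apply ContinuousOn.log (Real.continuous_sinh.continuousOn)
    intro x hx; exact ne_of_gt (Real.sinh_pos_iff.2 hx)
  · rw [interior_Ioi]
    intro a ha b hb hab
    rw [hderiv a ha, hderiv b hb]
    exact coth_strictAnti ha hb hab

lemma sinh_ineq {p u : ℝ} (hp1 : 1 < p) (hp2 : p < 2) (hu : 0 < u) :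
    Real.sinh u * (2 * Real.cosh u) ^ (p - 1) < Real.sinh (p * u) := by
  have hsu : 0 < Real.sinh u := Real.sinh_pos_iff.2 hu
  have hs2u : 0 < Real.sinh (2 * u) := Real.sinh_pos_iff.2 (by linarith)
  have hcu : 0 < Real.cosh u := Real.cosh_pos u
  have key := log_sinh_concave.2 (Set.mem_Ioi.2 hu) (Set.mem_Ioi.2 (show (0:ℝ) < 2 * u by linarith))
    (show u ≠ 2 * u by intro h; nlinarith [h]) (show (0:ℝ) < 2 - p by linarith)
    (show (0:ℝ) < p - 1 by linarith) (by ring)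
  simp only [smul_eq_mul] at key
  have hcomb : (2 - p) * u + (p - 1) * (2 * u) = p * u := by ring
  rw [hcomb] at key
  have hexp := Real.exp_lt_exp.2 key
  rw [Real.exp_add, Real.exp_log (Real.sinh_pos_iff.2 (by positivity : (0:ℝ) < p * u))] at hexp
  rw [mul_comm (2-p), mul_comm (p-1), ← Real.rpow_def_of_pos hsu, ← Real.rpow_def_of_pos hs2u] at hexp
  calc Real.sinh u * (2 * Real.cosh u) ^ (p - 1)
      = Real.sinh u ^ (2 - p) * Real.sinh (2 * u) ^ (p - 1) := by
        rw [Real.sinh_two_mul]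
        rw [show 2 * Real.sinh u * Real.cosh u = Real.sinh u * (2 * Real.cosh u) by ring]
        rw [Real.mul_rpow hsu.le (by positivity)]
        rw [← mul_assoc, ← Real.rpow_add hsu]
        norm_num
    _ < Real.sinh (p * u) := hexp

lemma D_strictAnti {p : ℝ} (hp1 : 1 < p) (hp2 : p < 2) :
    StrictAntiOn (fun u => (2 * Real.cosh u) ^ p - 2 * Real.cosh (p * u)) (Set.Ici 0) := by
  apply strictAntiOn_of_deriv_neg (convex_Ici 0)
  · apply ContinuousOn.sub
    · apply Continuous.continuousOn
      apply Continuous.rpow_const (by continuity)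
      intro x; right; linarith
    · exact Continuous.continuousOn (by continuity)
  · rw [interior_Ici]
    intro x hx
    have hx0 : (0:ℝ) < x := hx
    have hc : (0:ℝ) < 2 * Real.cosh x := by positivity
    have h1 : HasDerivAt (fun u : ℝ => (2 * Real.cosh u) ^ p)
        (2 * Real.sinh x * p * (2 * Real.cosh x) ^ (p - 1)) x :=
      ((Real.hasDerivAt_cosh x).const_mul 2).rpow_const (Or.inr hp1.le)
    have h2 : HasDerivAt (fun u : ℝ => 2 * Real.cosh (p * u))
        (2 * (Real.sinh (p * x) * p)) x := by
      have := (Real.hasDerivAt_cosh (p * x)).comp x ((hasDerivAt_id x).const_mul p)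
      simpa [mul_comm] using this.const_mul 2
    have hD := (h1.sub h2).deriv
    rw [show (fun u => (2 * Real.cosh u) ^ p - 2 * Real.cosh (p * u)) = ((fun u => (2 * Real.cosh u) ^ p) - fun u => 2 * Real.cosh (p * u)) from rfl, hD]
    have := sinh_ineq hp1 hp2 hx0
    nlinarith [this, (by linarith : (0:ℝ) < p)]

lemma core_ineq {p y : ℝ} (hp1 : 1 < p) (hp2 : p < 2) (hy : 1 < y) :
    (y + 1) ^ p < y ^ p + 1 + ((2:ℝ) ^ p - 2) * y ^ (p / 2) := by
  have hy0 : (0:ℝ) < y := by linarith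
  set u := Real.log y / 2 with hu_def
  have hu : 0 < u := by
    have := Real.log_pos hy
    positivity
  have hD := D_strictAnti hp1 hp2 (Set.self_mem_Ici) (Set.mem_Ici.2 hu.le) hu
  simp only [mul_zero, Real.cosh_zero, mul_one] at hD
  have hexpu : Real.exp u = y ^ (1/2 : ℝ) := by
    rw [Real.rpow_def_of_pos hy0]; congr 1; rw [hu_def]; ring
  have hexpnu : Real.exp (-u) = y ^ (-(1/2) : ℝ) := by
    rw [Real.rpow_def_of_pos hy0]; congr 1; rw [hu_def]; ring
  have hexppu : Real.exp (p * u) = y ^ (p/2 : ℝ) := by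
    rw [Real.rpow_def_of_pos hy0]; congr 1; rw [hu_def]; ring
  have hexpnpu : Real.exp (-(p * u)) = y ^ (-(p/2) : ℝ) := by
    rw [Real.rpow_def_of_pos hy0]; congr 1; rw [hu_def]; ring
  have hab : y ^ (1/2:ℝ) * y ^ (-(1/2):ℝ) = 1 := by
    rw [← Real.rpow_add hy0]; norm_num
  have ha2 : y ^ (1/2:ℝ) * y ^ (1/2:ℝ) = y := by
    rw [← Real.rpow_add hy0]; norm_num
  have hcosh : 2 * Real.cosh u = (y + 1) * y ^ (-(1/2) : ℝ) := by
    rw [Real.cosh_eq, hexpu, hexpnu]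
    linear_combination (y ^ (-(1/2):ℝ)) * ha2 - (y ^ ((1/2):ℝ)) * hab
  have hcoshp : 2 * Real.cosh (p * u) = y ^ (p/2 : ℝ) + y ^ (-(p/2) : ℝ) := by
    rw [Real.cosh_eq, hexppu, hexpnpu]; ring
  rw [hcosh, hcoshp] at hD
  have hsplit : ((y + 1) * y ^ (-(1/2) : ℝ)) ^ p = (y + 1) ^ p * y ^ (-(p/2) : ℝ) := by
    rw [Real.mul_rpow (by linarith) (by positivity), ← Real.rpow_mul hy0.le]
    congr 1
    ring
  rw [hsplit] at hD
  have hmM : y ^ (-(p/2):ℝ) * y ^ (p/2:ℝ) = 1 := by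
    rw [← Real.rpow_add hy0]; norm_num
  have hMM : y ^ (p/2:ℝ) * y ^ (p/2:ℝ) = y ^ p := by
    rw [← Real.rpow_add hy0]; congr 1; ring
  have hMpos : (0:ℝ) < y ^ (p/2:ℝ) := by positivity
  have h3 := mul_lt_mul_of_pos_right hD hMpos
  have expand : ((y+1)^p * y^(-(p/2):ℝ) - (y^(p/2:ℝ) + y^(-(p/2):ℝ))) * y^(p/2:ℝ)
      = (y+1)^p * (y^(-(p/2):ℝ) * y^(p/2:ℝ)) - y^(p/2:ℝ)*y^(p/2:ℝ)
        - y^(-(p/2):ℝ)*y^(p/2:ℝ) := by ring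
  rw [expand, hmM, hMM] at h3
  linarith

lemma rpow_ineq {γ n : ℝ} (hn1 : 1 < n) (hn2 : n < 2) (hγ : 1 < γ) :
    (γ ^ n + 1) ^ (2 / n : ℝ) < γ ^ 2 + 1 + ((2:ℝ) ^ (2/n : ℝ) - 2) * γ := by
  have hn0 : (0:ℝ) < n := by linarith
  have hγ0 : (0:ℝ) < γ := by linarith
  have hp1 : 1 < 2 / n := (one_lt_div hn0).2 hn2
  have hp2 : 2 / n < 2 := by rw [div_lt_iff₀ hn0]; nlinarith
  have hy : 1 < γ ^ n := Real.one_lt_rpow_iff_of_pos hγ0 |>.2 (Or.inl ⟨hγ, hn0⟩)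
  have h := core_ineq hp1 hp2 hy
  have e1 : (γ ^ n) ^ (2/n : ℝ) = γ ^ 2 := by
    rw [← Real.rpow_natCast γ 2, ← Real.rpow_mul hγ0.le]
    congr 1
    field_simp
    norm_num
  have e2 : (γ ^ n) ^ ((2/n)/2 : ℝ) = γ := by
    rw [← Real.rpow_mul hγ0.le]
    rw [show n * (2/n/2) = 1 by field_simp]
    exact Real.rpow_one γ
  rw [e1, e2] at h
  exact h


theorem stmt_4 (n : ℝ) (hn1 : 1 < n) (hn2 : n < 2) :
    ∀ γ : ℝ, 1 ≤ γ →
      (1 - (2 : ℝ) ^ ((2 - n) / n) ≤ pythCos γ n ∧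
        (pythCos γ n = 1 - (2 : ℝ) ^ ((2 - n) / n) ↔ γ = 1)) ∧
      (Real.arccos (pythCos γ n) ≤ Real.arccos (1 - (2 : ℝ) ^ ((2 - n) / n)) ∧
        (Real.arccos (pythCos γ n) = Real.arccos (1 - (2 : ℝ) ^ ((2 - n) / n)) ↔ γ = 1)) := by
  intro γ hγ
  have hn0 : (0:ℝ) < n := by linarith
  have hγ0 : (0:ℝ) < γ := by linarith
  set c : ℝ := (2 : ℝ) ^ ((2 - n) / n) with hc_def
  have h2n : (2:ℝ) ^ (2/n : ℝ) = 2 * c := by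
    rw [hc_def, show (2-n)/n = 2/n - 1 by field_simp, Real.rpow_sub (by norm_num : (0:ℝ) < 2)]
    rw [Real.rpow_one]
    ring
  have hc1 : 1 < c := by
    rw [hc_def]
    have : (0:ℝ) < (2-n)/n := div_pos (by linarith) hn0
    calc (1:ℝ) = 2 ^ (0:ℝ) := by norm_num
      _ < 2 ^ ((2-n)/n) := Real.rpow_lt_rpow_of_exponent_lt (by norm_num) this
  have hc2 : c < 2 := by
    rw [hc_def]
    have hlt : (2-n)/n < 1 := by rw [div_lt_one hn0]; linarith
    calc (2:ℝ) ^ ((2-n)/n) < 2 ^ (1:ℝ) := Real.rpow_lt_rpow_of_exponent_lt (by norm_num) hlt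
      _ = 2 := Real.rpow_one 2
  have hval1 : pythCos 1 n = 1 - c := by
    rw [pythCos, Real.one_rpow]
    norm_num
    rw [h2n]
    ring
  -- strict inequality for γ > 1
  have hstrict : 1 < γ → 1 - c < pythCos γ n := by
    intro hγ1
    have h := rpow_ineq hn1 hn2 hγ1
    rw [h2n] at h
    rw [pythCos, lt_div_iff₀ (by positivity)]
    nlinarith
  -- pythCos < 1 always (γ ≥ 1)
  have hlt1 : pythCos γ n < 1 := by
    rw [pythCos, div_lt_one (by positivity)]
    have h1 : (γ:ℝ)^2 = (γ^n)^(2/n : ℝ) := by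
      rw [← Real.rpow_natCast γ 2, ← Real.rpow_mul hγ0.le]
      congr 1
      field_simp
      norm_num
    have h2 : (γ^n : ℝ)^(2/n : ℝ) < (γ^n + 1)^(2/n : ℝ) := by
      apply Real.rpow_lt_rpow (by positivity) (by linarith) (by positivity)
    nlinarith [h1, h2, sq_nonneg (γ - 1)]
  have hge : 1 - c ≤ pythCos γ n := by
    rcases eq_or_lt_of_le hγ with h | h
    · rw [← h, hval1]
    · exact (hstrict h).le
  have hiff : pythCos γ n = 1 - c ↔ γ = 1 := by
    constructor
    · intro he
      by_contra hne
      have h1 : 1 < γ := lt_of_le_of_ne hγ (Ne.symm hne)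
      exact absurd he (ne_of_gt (hstrict h1))
    · intro he; rw [he, hval1]
  refine ⟨⟨hge, hiff⟩, ?_, ?_⟩
  · rcases eq_or_lt_of_le hge with h | h
    · rw [h]
    · exact (Real.strictAntiOn_arccos ⟨by linarith, by linarith⟩ ⟨by linarith, hlt1.le⟩ h).le
  · constructor
    · intro he
      by_contra hne
      have h1 : 1 < γ := lt_of_le_of_ne hγ (Ne.symm hne)
      have := Real.strictAntiOn_arccos ⟨by linarith, by linarith⟩
        ⟨by linarith [hstrict h1], hlt1.le⟩ (hstrict h1)
      linarith [this, he.le, he.ge]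
    · intro he; rw [he, hval1]
end

section
/- For every real n > 2 and every real γ ≥ 1, F(γ, n) ≤ 1 − 2^((2−n)/n), with equality if and only if γ = 1; equivalently, for fixed degree n > 2 the smallest vertex angle θ(γ, n) over all side ratios γ ≥ 1 is θ_min = arccos(1 − 2^((2−n)/n)), attained exactly by the isosceles triangle γ = 1. -/
open Real Set


-- Key scalar inequality for the derivative of h
lemma key_ineq {p t : ℝ} (hp0 : 0 < p) (hp1 : p < 1) (ht0 : 0 < t) (ht1 : t < 1) :
    (p/2) * (1 - (1+t) ^ (p-1)) < (1-p) * t * (1+t) ^ (p-2) := by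
  have h1t : (0:ℝ) < 1 + t := by linarith
  -- Bernoulli: (1+t)^(1-p) ≤ 1 + (1-p)t
  have hbern : (1+t) ^ (1-p) ≤ 1 + (1-p)*t :=
    rpow_one_add_le_one_add_mul_self (by linarith) (by linarith) (by linarith)
  have hinv : (1+t) ^ (p-1) = ((1+t) ^ (1-p))⁻¹ := by
    rw [show p - 1 = -(1-p) by ring, Real.rpow_neg h1t.le]
  have hposd : (0:ℝ) < (1+t) ^ (1-p) := rpow_pos_of_pos h1t _
  have h2 : 1 - (1+t) ^ (p-1) ≤ (1-p)*t := by
    have hge : ((1 + (1-p)*t))⁻¹ ≤ (1+t) ^ (p-1) := by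
      rw [hinv]
      apply inv_anti₀ hposd hbern
    have hpos2 : (0:ℝ) < 1 + (1-p)*t := by nlinarith
    have : 1 - ((1 + (1-p)*t))⁻¹ ≤ (1-p)*t := by
      rw [sub_le_iff_le_add, ← sub_le_iff_le_add']
      rw [inv_eq_one_div, le_div_iff₀ hpos2]
      nlinarith [sq_nonneg ((1-p)*t)]
    linarith
  -- 2^(p-1) ≥ p, hence 2^(p-2) ≥ p/2
  have hexp : p ≤ (2:ℝ) ^ (p-1) := by
    rw [Real.rpow_def_of_pos (by norm_num : (0:ℝ) < 2)]
    have hlog : Real.log 2 ≤ 1 := by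
      have := Real.log_two_lt_d9
      linarith
    have h3 : p - 1 ≤ Real.log 2 * (p-1) := by nlinarith
    have h4 : Real.log 2 * (p-1) + 1 ≤ Real.exp (Real.log 2 * (p-1)) :=
      Real.add_one_le_exp _
    linarith
  have h2p2 : p/2 ≤ (2:ℝ) ^ (p-2) := by
    have : (2:ℝ) ^ (p-2) = 2 ^ (p-1) / 2 := by
      rw [show p - 2 = (p-1) + (-1) by ring, Real.rpow_add (by norm_num : (0:ℝ) < 2)]
      rw [Real.rpow_neg_one]
      ring
    rw [this]
    linarith
  have hlt : (2:ℝ) ^ (p-2) < (1+t) ^ (p-2) :=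
    Real.rpow_lt_rpow_of_neg h1t (by linarith) (by linarith)
  have hmt : (0:ℝ) < (1-p) * t := mul_pos (by linarith) ht0
  calc (p/2) * (1 - (1+t) ^ (p-1)) ≤ (p/2) * ((1-p)*t) := by
        apply mul_le_mul_of_nonneg_left h2 (by linarith)
    _ ≤ (2:ℝ) ^ (p-2) * ((1-p)*t) := by
        apply mul_le_mul_of_nonneg_right h2p2 hmt.le
    _ < (1+t) ^ (p-2) * ((1-p)*t) := by
        apply mul_lt_mul_of_pos_right hlt hmt
    _ = (1-p) * t * (1+t) ^ (p-2) := by ring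

noncomputable def hfun (p t : ℝ) : ℝ := t ^ (-(p/2)) * (1 - (1+t) ^ (p-1))

lemma hfun_hasDeriv {p t : ℝ} (ht : 0 < t) :
    HasDerivAt (hfun p)
      ((-(p/2)) * t ^ (-(p/2)-1) * (1 - (1+t) ^ (p-1))
        + t ^ (-(p/2)) * (-(1 * (p-1) * (1+t) ^ (p-1-1)))) t := by
  have h1 : HasDerivAt (fun t : ℝ => t ^ (-(p/2))) ((-(p/2)) * t ^ (-(p/2)-1)) t :=
    Real.hasDerivAt_rpow_const (Or.inl ht.ne')
  have h2 : HasDerivAt (fun t : ℝ => 1 + t) 1 t := (hasDerivAt_id t).const_add 1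
  have h3 : HasDerivAt (fun t : ℝ => (1+t) ^ (p-1)) (1 * (p-1) * (1+t) ^ (p-1-1)) t :=
    h2.rpow_const (Or.inl (by linarith : (1:ℝ) + t ≠ 0))
  have h4 : HasDerivAt (fun t : ℝ => 1 - (1+t) ^ (p-1)) (-(1 * (p-1) * (1+t) ^ (p-1-1))) t :=
    h3.const_sub 1
  exact h1.mul h4

lemma hfun_lt {p t : ℝ} (hp0 : 0 < p) (hp1 : p < 1) (ht0 : 0 < t) (ht1 : t < 1) :
    hfun p t < 1 - 2 ^ (p-1) := by
  have hmono : StrictMonoOn (hfun p) (Set.Ioc 0 1) := by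
    apply strictMonoOn_of_deriv_pos (convex_Ioc 0 1)
    · intro x hx
      exact (hfun_hasDeriv hx.1).differentiableAt.continuousAt.continuousWithinAt
    · intro x hx
      rw [interior_Ioc] at hx
      obtain ⟨hxa, hxb⟩ := hx
      rw [(hfun_hasDeriv hxa).deriv]
      have key := key_ineq hp0 hp1 hxa hxb
      have hx1 : (0:ℝ) < 1 + x := by linarith
      -- rewrite into weighted form
      have e1 : x ^ (-(p/2)) = x ^ (-(p/2)-1) * x := by
        rw [← Real.rpow_add_one hxa.ne' (-(p/2)-1)]
        ring_nf
      have hw : (0:ℝ) < x ^ (-(p/2)-1) := rpow_pos_of_pos hxa _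
      have e2 : p - 1 - 1 = p - 2 := by ring
      rw [e1, e2]
      have : (-(p/2)) * x ^ (-(p/2)-1) * (1 - (1+x) ^ (p-1))
          + x ^ (-(p/2)-1) * x * (-(1 * (p-1) * (1+x) ^ (p-2)))
          = x ^ (-(p/2)-1) * ((1-p) * x * (1+x) ^ (p-2) - (p/2) * (1 - (1+x) ^ (p-1))) := by
        ring
      rw [this]
      apply mul_pos hw
      linarith
  have h1mem : (1:ℝ) ∈ Set.Ioc (0:ℝ) 1 := by constructor <;> norm_num
  have htmem : t ∈ Set.Ioc (0:ℝ) 1 := ⟨ht0, ht1.le⟩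
  have := hmono htmem h1mem ht1
  have hval : hfun p 1 = 1 - 2 ^ (p-1) := by
    unfold hfun
    norm_num
  rwa [hval] at this

noncomputable def Gfun (n x : ℝ) : ℝ := (x ^ n + 1) ^ (2/n) - (x-1)^2 - 2 ^ (2/n) * x

lemma Gfun_hasDeriv {n x : ℝ} (hn : 2 < n) (hx : 0 < x) :
    HasDerivAt (Gfun n)
      (2 * x ^ (n-1) * (x ^ n + 1) ^ (2/n - 1) - 2*(x-1) - 2 ^ (2/n)) x := by
  have hn0 : n ≠ 0 := by linarith
  have h1 : HasDerivAt (fun x : ℝ => x ^ n) (n * x ^ (n-1)) x :=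
    Real.hasDerivAt_rpow_const (Or.inl hx.ne')
  have hpos : (0:ℝ) < x ^ n + 1 := by positivity
  have h2 : HasDerivAt (fun x : ℝ => (x ^ n + 1) ^ (2/n))
      ((n * x ^ (n-1)) * (2/n) * (x ^ n + 1) ^ (2/n - 1)) x :=
    (h1.add_const 1).rpow_const (Or.inl hpos.ne')
  have h3 : HasDerivAt (fun x : ℝ => (x-1)^2) (2*(x-1)) x := by
    have : HasDerivAt (fun x : ℝ => (x-1)^2) _ x := ((hasDerivAt_id x).sub_const 1).pow 2
    simpa using this
  have h4 : HasDerivAt (fun x : ℝ => 2 ^ (2/n) * x) (2 ^ (2/n)) x := by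
    simpa using (hasDerivAt_id x).const_mul ((2:ℝ) ^ (2/n))
  have : HasDerivAt (Gfun n) _ x := (h2.sub h3).sub h4
  convert this using 1
  field_simp

lemma Gfun_deriv_pos {n x : ℝ} (hn : 2 < n) (hx : 1 < x) :
    0 < 2 * x ^ (n-1) * (x ^ n + 1) ^ (2/n - 1) - 2*(x-1) - 2 ^ (2/n) := by
  have hx0 : (0:ℝ) < x := by linarith
  have hn0 : (0:ℝ) < n := by linarith
  set p := 2/n with hp
  have hp0 : 0 < p := by positivity
  have hp1 : p < 1 := by
    rw [hp, div_lt_one hn0]; linarith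
  have hnp : n * p = 2 := by
    rw [hp]; field_simp
  set t := x ^ (-n) with htdef
  have ht0 : 0 < t := rpow_pos_of_pos hx0 _
  have ht1 : t < 1 := rpow_lt_one_of_one_lt_of_neg hx (by linarith)
  have hxn : (0:ℝ) < x ^ n := rpow_pos_of_pos hx0 _
  have hxx : x ^ n * x ^ (-n) = 1 := by
    rw [← Real.rpow_add hx0]; norm_num
  have hid0 : 1 + t = (x ^ n + 1) * x ^ (-n) := by
    rw [htdef]; nlinarith [hxx]
  have hid : x ^ (n-1) * (x ^ n + 1) ^ (p - 1) = x * (1+t) ^ (p-1) := by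
    rw [hid0, Real.mul_rpow (by positivity) (rpow_pos_of_pos hx0 (-n)).le,
      ← Real.rpow_mul hx0.le (-n) (p-1)]
    have e1 : -n * (p-1) = n - 2 := by linarith [hnp]
    rw [e1]
    rw [show x * ((x ^ n + 1) ^ (p - 1) * x ^ (n-2))
        = (x ^ (1:ℝ) * x ^ (n-2)) * (x ^ n + 1) ^ (p - 1) by rw [Real.rpow_one]; ring,
      ← Real.rpow_add hx0, show (1:ℝ) + (n-2) = n-1 by ring]
  have hxt : t ^ (-(p/2)) = x := by
    rw [htdef, ← Real.rpow_mul hx0.le (-n) (-(p/2))]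
    have : -n * -(p/2) = 1 := by linarith [hnp]
    rw [this, Real.rpow_one]
  have hh := hfun_lt hp0 hp1 ht0 ht1
  unfold hfun at hh
  rw [hxt] at hh
  have h2p : (2:ℝ) ^ p = 2 * 2 ^ (p-1) := by
    rw [show p = 1 + (p-1) by ring, Real.rpow_add (by norm_num : (0:ℝ) < 2)]
    norm_num
  have hexpand : x * (1 - (1+t) ^ (p-1)) = x - x * (1+t) ^ (p-1) := by ring
  have hgoal : 2 * x ^ (n-1) * (x ^ n + 1) ^ (p-1) = 2 * (x * (1+t) ^ (p-1)) := by
    rw [mul_assoc, hid]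
  rw [hgoal]
  rw [hexpand] at hh
  linarith [hh, h2p]

lemma Gfun_strictMono {n : ℝ} (hn : 2 < n) : StrictMonoOn (Gfun n) (Set.Ici 1) := by
  apply strictMonoOn_of_deriv_pos (convex_Ici 1)
  · intro x hx
    have hx0 : (0:ℝ) < x := lt_of_lt_of_le one_pos hx
    exact (Gfun_hasDeriv hn hx0).differentiableAt.continuousAt.continuousWithinAt
  · intro x hx
    rw [interior_Ici] at hx
    rw [(Gfun_hasDeriv hn (lt_trans one_pos hx)).deriv]
    exact Gfun_deriv_pos hn hx

lemma Gfun_one {n : ℝ} (hn : 2 < n) : Gfun n 1 = 0 := by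
  unfold Gfun
  rw [Real.one_rpow]
  norm_num

lemma Gfun_nonneg {n γ : ℝ} (hn : 2 < n) (hγ : 1 ≤ γ) : 0 ≤ Gfun n γ := by
  rcases eq_or_lt_of_le hγ with h | h
  · rw [← h, Gfun_one hn]
  · have := Gfun_strictMono hn (Set.mem_Ici.2 le_rfl) (Set.mem_Ici.2 hγ) h
    rw [Gfun_one hn] at this
    exact this.le

lemma Gfun_eq_zero_iff {n γ : ℝ} (hn : 2 < n) (hγ : 1 ≤ γ) : Gfun n γ = 0 ↔ γ = 1 := by
  constructor
  · intro h
    by_contra hne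
    have h1 : 1 < γ := lt_of_le_of_ne hγ (Ne.symm hne)
    have := Gfun_strictMono hn (Set.mem_Ici.2 le_rfl) (Set.mem_Ici.2 hγ) h1
    rw [Gfun_one hn, h] at this
    exact lt_irrefl 0 this
  · intro h; rw [h]; exact Gfun_one hn

theorem stmt_5 (n : ℝ) (hn : 2 < n) :
    ∀ γ : ℝ, 1 ≤ γ →
      (pythCos γ n ≤ 1 - (2 : ℝ) ^ ((2 - n) / n) ∧
        (pythCos γ n = 1 - (2 : ℝ) ^ ((2 - n) / n) ↔ γ = 1)) ∧
      (Real.arccos (1 - (2 : ℝ) ^ ((2 - n) / n)) ≤ Real.arccos (pythCos γ n) ∧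
        (Real.arccos (pythCos γ n) = Real.arccos (1 - (2 : ℝ) ^ ((2 - n) / n)) ↔ γ = 1)) := by
  intro γ hγ
  have hγ0 : (0:ℝ) < γ := lt_of_lt_of_le one_pos hγ
  have hn0 : (0:ℝ) < n := by linarith
  have hn0' : n ≠ 0 := hn0.ne'
  -- exponent bookkeeping
  have hpow2 : (2:ℝ) ^ (2/n) = 2 * 2 ^ ((2-n)/n) := by
    rw [show (2:ℝ)/n = 1 + (2-n)/n by field_simp; ring,
      Real.rpow_add (by norm_num : (0:ℝ) < 2), Real.rpow_one]
  have hγn : (0:ℝ) < γ ^ n := Real.rpow_pos_of_pos hγ0 _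
  have hcn : (0:ℝ) < (γ ^ n + 1) ^ (2/n) := Real.rpow_pos_of_pos (by linarith) _
  -- value of pythCos times 2γ
  have hval : pythCos γ n * (2*γ) = γ^2 + 1 - (γ ^ n + 1) ^ (2/n) := by
    unfold pythCos
    field_simp
  -- part 1: inequality
  have hG := Gfun_nonneg hn hγ
  have hGiff := Gfun_eq_zero_iff hn hγ
  unfold Gfun at hG hGiff
  have h2γ : (0:ℝ) < 2*γ := by linarith
  have hle : pythCos γ n ≤ 1 - (2:ℝ) ^ ((2-n)/n) := by
    rw [← mul_le_mul_iff_of_pos_right h2γ, hval]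
    nlinarith [hG, hpow2]
  have heq : pythCos γ n = 1 - (2:ℝ) ^ ((2-n)/n) ↔ γ = 1 := by
    rw [← hGiff]
    constructor
    · intro h
      have := hval
      rw [h] at this
      nlinarith [hpow2]
    · intro h
      have h2 : pythCos γ n * (2*γ) = (1 - (2:ℝ) ^ ((2-n)/n)) * (2*γ) := by
        rw [hval]; nlinarith [hpow2]
      exact mul_right_cancel₀ (ne_of_gt h2γ) h2
  -- bounds for arccos
  have hc0pos : (0:ℝ) < 2 ^ ((2-n)/n) := Real.rpow_pos_of_pos two_pos _
  have hc0lt : (2:ℝ) ^ ((2-n)/n) < 1 :=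
    Real.rpow_lt_one_of_one_lt_of_neg one_lt_two
      (div_neg_of_neg_of_pos (by linarith) hn0)
  have hc0mem : (1 - (2:ℝ) ^ ((2-n)/n)) ∈ Set.Icc (-1:ℝ) 1 :=
    ⟨by linarith, by linarith⟩
  -- pythCos ≥ -1
  have hγ1n : γ ^ n + 1 ≤ (γ+1) ^ n := by
    have e : (γ+1) ^ n = (γ+1) ^ (n-1) * (γ+1) := by
      rw [← Real.rpow_add_one (by positivity : (γ:ℝ)+1 ≠ 0) (n-1)]
      norm_num
    have h1 : γ ^ (n-1) ≤ (γ+1) ^ (n-1) :=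
      Real.rpow_le_rpow hγ0.le (by linarith) (by linarith)
    have h2 : (1:ℝ) ≤ (γ+1) ^ (n-1) := Real.one_le_rpow (by linarith) (by linarith)
    have h3 : γ ^ (n-1) * γ = γ ^ n := by
      rw [← Real.rpow_add_one hγ0.ne' (n-1)]; norm_num
    nlinarith [h1, h2, h3, Real.rpow_pos_of_pos hγ0 (n-1)]
  have hcsq : (γ ^ n + 1) ^ (2/n) ≤ (γ+1)^2 := by
    have h1 : (γ ^ n + 1) ^ (2/n) ≤ ((γ+1) ^ n) ^ (2/n) :=
      Real.rpow_le_rpow (by positivity) hγ1n (by positivity)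
    have h2 : ((γ+1) ^ n) ^ (2/n) = (γ+1)^2 := by
      rw [← Real.rpow_mul (by linarith : (0:ℝ) ≤ γ+1), show n * (2/n) = 2 by field_simp,
        show (2:ℝ) = ((2:ℕ):ℝ) by norm_num, Real.rpow_natCast]
    rw [← h2]
    exact h1
  have hm1 : (-1:ℝ) ≤ pythCos γ n := by
    rw [← mul_le_mul_iff_of_pos_right h2γ, hval]
    nlinarith [hcsq]
  have hpmem : pythCos γ n ∈ Set.Icc (-1:ℝ) 1 :=
    ⟨hm1, le_trans hle (by linarith)⟩
  have harle : Real.arccos (1 - (2:ℝ) ^ ((2-n)/n)) ≤ Real.arccos (pythCos γ n) := by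
    rcases eq_or_lt_of_le hle with h | h
    · rw [h]
    · exact (Real.strictAntiOn_arccos hpmem hc0mem h).le
  have hareq : Real.arccos (pythCos γ n) = Real.arccos (1 - (2:ℝ) ^ ((2-n)/n)) ↔ γ = 1 := by
    rw [Real.arccos_inj hpmem.1 hpmem.2 hc0mem.1 hc0mem.2]
    exact heq
  exact ⟨⟨hle, heq⟩, ⟨harle, hareq⟩⟩
end

section
/- For every real n < 0 and every real γ ≥ 2, F(γ, n) > 1; hence the vertex angle θ(γ, n) is not real and the negative-degree Pythagorean theorem cannot be realized by a triangle with side ratio γ ≥ 2. -/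
theorem stmt_10 (n γ : ℝ) (hn : n < 0) (hγ : 2 ≤ γ) :
    1 < pythCos γ n := by
  have hγ0 : (0:ℝ) < γ := by linarith
  have h1 : (1:ℝ) < γ ^ n + 1 := by
    have := Real.rpow_pos_of_pos hγ0 n
    linarith
  have h2 : (γ ^ n + 1) ^ (2 / n) < 1 :=
    Real.rpow_lt_one_of_one_lt_of_neg h1 (div_neg_of_pos_of_neg two_pos hn)
  rw [pythCos, lt_div_iff₀ (by linarith : (0:ℝ) < 2 * γ)]
  nlinarith [sq_nonneg (γ - 1)]
end
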